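/- arXiv:2311.15976 — 2 statements merged into one kernel-verified Lean document; each statement's English description precedes it below -/
import Mathlib

section
/- If g ∈ GL_n(k) has finite order ℓ, where k is a number field of degree d over ℚ, then ℓ ≤ 4(nd)^(2n). -/
/-!
The minimal polynomial `p` of `g` has degree at most `n` and divides `X ^ ℓ - 1 = ∏_{m ∣ ℓ} Φ_m`.
Let `S` be the set of `m ∣ ℓ` such that `p` is not coprime to `Φ_m`, i.e. has a primitive `m`-th
root of unity `ζ_m` as a root. Then `p ∣ ∏_{m ∈ S} Φ_m ∣ X ^ (∏_{m ∈ S} m) - 1`, so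
`ℓ ∣ ∏_{m ∈ S} m`. The roots `ζ_m` are distinct, so `|S| ≤ n`, and
`φ(m) = [ℚ(ζ_m) : ℚ] ≤ [k(ζ_m) : ℚ] ≤ n d`. Since `m ≤ φ(m) ^ 2` except for `m = 2, 6`, where
`m ≤ 2 φ(m) ^ 2`, this gives `ℓ ≤ 4 (n d) ^ (2 |S|)`.
-/

open Polynomial IntermediateField Finset Nat

theorem Nat.totient_prime_pow_succ_sq {p : ℕ} (hp : p.Prime) (b : ℕ) :
    φ (p ^ (b + 1)) ^ 2 = p ^ b * (p ^ b * (p - 1) ^ 2) := by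
  rw [totient_prime_pow_succ hp]
  ring

theorem Nat.Prime.three_le_of_odd_pow {p a : ℕ} (hp : p.Prime) (ha : a ≠ 0) (hodd : Odd (p ^ a)) :
    3 ≤ p := by
  have := hp.two_le
  have : p ≠ 2 := by rintro rfl; exact not_even_iff_odd.2 ((odd_pow_iff ha).1 hodd) even_two
  omega

theorem Nat.le_totient_sq_of_odd {u : ℕ} (hu : Odd u) : u ≤ φ u ^ 2 := by
  induction u using Nat.recOnPosPrimePosCoprime with
  | zero => simp at hu
  | one => simp
  | prime_pow p a hp ha =>
    have hp3 := hp.three_le_of_odd_pow ha.ne' hu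
    obtain ⟨b, rfl⟩ := exists_eq_succ_of_ne_zero ha.ne'
    rw [totient_prime_pow_succ_sq hp, pow_succ]
    obtain ⟨q, rfl⟩ := Nat.exists_eq_add_of_le' hp.one_le
    refine Nat.mul_le_mul_left _ ?_
    rw [Nat.add_sub_cancel]
    calc q + 1 ≤ q ^ 2 := by nlinarith
      _ ≤ (q + 1) ^ b * q ^ 2 := le_mul_of_one_le_left' (Nat.one_le_pow _ _ (by omega))
  | coprime a b _ _ hab iha ihb =>
    rw [Nat.odd_mul] at hu
    rw [totient_mul hab, mul_pow]
    exact Nat.mul_le_mul (iha hu.1) (ihb hu.2)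

theorem Nat.two_mul_le_totient_sq_of_odd {u : ℕ} (hu : Odd u) (h1 : u ≠ 1) (h3 : u ≠ 3) :
    2 * u ≤ φ u ^ 2 := by
  induction u using Nat.recOnPosPrimePosCoprime with
  | zero => simp at hu
  | one => exact absurd rfl h1
  | prime_pow p a hp ha =>
    have hp3 := hp.three_le_of_odd_pow ha.ne' hu
    obtain ⟨b, rfl⟩ := exists_eq_succ_of_ne_zero ha.ne'
    rw [totient_prime_pow_succ_sq hp, pow_succ, mul_left_comm]
    obtain ⟨q, rfl⟩ := Nat.exists_eq_add_of_le' hp.one_le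
    refine Nat.mul_le_mul_left _ ?_
    rw [Nat.add_sub_cancel]
    rcases b with _ | b
    · have : q ≠ 2 := by rintro rfl; simp at h3
      have : 3 ≤ q := by omega
      simp only [pow_zero, one_mul]
      nlinarith
    · calc 2 * (q + 1) ≤ (q + 1) * q ^ 2 := by nlinarith
        _ ≤ (q + 1) ^ (b + 1) * q ^ 2 := by gcongr; exact le_self_pow₀ (by omega) (by omega)
  | coprime a b ha hb hab iha ihb =>
    rw [Nat.odd_mul] at hu
    rw [totient_mul hab, mul_pow]
    rcases eq_or_ne a 3 with rfl | ha3
    · have hb3 : b ≠ 3 := by rintro rfl; norm_num at hab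
      calc 2 * (3 * b) = 3 * (2 * b) := by ring
        _ ≤ φ 3 ^ 2 * φ b ^ 2 := Nat.mul_le_mul (le_totient_sq_of_odd hu.1) (ihb hu.2 hb.ne' hb3)
    · calc 2 * (a * b) = 2 * a * b := by ring
        _ ≤ φ a ^ 2 * φ b ^ 2 := Nat.mul_le_mul (iha hu.1 ha.ne' ha3) (le_totient_sq_of_odd hu.2)

theorem Nat.le_totient_sq {m : ℕ} (h0 : m ≠ 0) (h2 : m ≠ 2) (h6 : m ≠ 6) : m ≤ φ m ^ 2 := by
  obtain ⟨a, u, hu, rfl⟩ := exists_eq_two_pow_mul_odd h0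
  rw [totient_mul (Coprime.pow_left a (coprime_two_left.2 hu)), mul_pow]
  match a with
  | 0 => simpa using le_totient_sq_of_odd hu
  | 1 =>
    have h1 : u ≠ 1 := by rintro rfl; simp at h2
    have h3 : u ≠ 3 := by rintro rfl; simp at h6
    simpa using two_mul_le_totient_sq_of_odd hu h1 h3
  | b + 2 =>
    refine Nat.mul_le_mul ?_ (le_totient_sq_of_odd hu)
    simp only [totient_prime_pow_succ_sq prime_two, Nat.add_one_sub_one, one_pow, mul_one,
      ← pow_add]
    exact Nat.pow_le_pow_right two_pos (by omega)

theorem prod_le_four_mul_pow_card_of_totient_le {S : Finset ℕ} (h0 : 0 ∉ S) {N : ℕ}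
    (hN : ∀ m ∈ S, φ m ≤ N) : ∏ m ∈ S, m ≤ 4 * N ^ (2 * #S) := by
  set T : Finset ℕ := {2, 6}
  have hST : ∀ m ∈ S ∩ T, m ≤ 2 * N ^ 2 := by
    intro m hm
    obtain ⟨hmS, hmT⟩ := mem_inter.1 hm
    have := hN m hmS
    rcases mem_insert.1 hmT with rfl | hm6
    · rw [totient_two] at this
      nlinarith
    · rw [mem_singleton.1 hm6] at this ⊢
      have : φ 6 = 2 := by decide
      nlinarith
  have hSdT : ∀ m ∈ S \ T, m ≤ N ^ 2 := by
    intro m hm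
    obtain ⟨hmS, hmT⟩ := mem_sdiff.1 hm
    simp only [T, mem_insert, mem_singleton, not_or] at hmT
    exact (le_totient_sq (ne_of_mem_of_not_mem hmS h0) hmT.1 hmT.2).trans
      (Nat.pow_le_pow_left (hN m hmS) 2)
  calc ∏ m ∈ S, m = (∏ m ∈ S ∩ T, m) * ∏ m ∈ S \ T, m := (prod_inter_mul_prod_sdiff S T _).symm
    _ ≤ (∏ m ∈ S ∩ T, 2 * N ^ 2) * ∏ m ∈ S \ T, N ^ 2 :=
        Nat.mul_le_mul (prod_le_prod' hST) (prod_le_prod' hSdT)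
    _ = 2 ^ #(S ∩ T) * N ^ (2 * #S) := by
        rw [prod_const, prod_const, mul_pow, mul_assoc, ← pow_mul, ← pow_mul, ← pow_add,
          ← mul_add, card_inter_add_card_sdiff]
    _ ≤ 4 * N ^ (2 * #S) := by
        gcongr
        calc 2 ^ #(S ∩ T) ≤ 2 ^ #T := Nat.pow_le_pow_right two_pos (card_le_card inter_subset_right)
          _ = 4 := rfl

theorem natDegree_minpoly_le_finrank_mul {F K L : Type*} [Field F] [Field K] [Field L]
    [Algebra F K] [Algebra K L] [Algebra F L] [IsScalarTower F K L] [FiniteDimensional F K]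
    {α : L} (hα : IsIntegral K α) :
    (minpoly F α).natDegree ≤ Module.finrank F K * (minpoly K α).natDegree := by
  have := adjoin.finiteDimensional hα
  have := FiniteDimensional.trans F K K⟮α⟯
  have : IsScalarTower F K⟮α⟯ L := .of_algebraMap_eq fun _ => rfl
  calc (minpoly F α).natDegree = (minpoly F (AdjoinSimple.gen K α)).natDegree := by
        rw [← minpoly.algebraMap_eq (algebraMap K⟮α⟯ L).injective, AdjoinSimple.algebraMap_gen]
    _ ≤ Module.finrank F K⟮α⟯ := minpoly.natDegree_le _
    _ = Module.finrank F K * (minpoly K α).natDegree := by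
        rw [← Module.finrank_mul_finrank F K K⟮α⟯, adjoin.finrank hα]

theorem exists_isPrimitiveRoot_aeval_eq_zero_of_not_isCoprime_cyclotomic {K L : Type*} [Field K]
    [CharZero K] [Field L] [IsAlgClosed L] [Algebra K L] {p : K[X]} {m : ℕ} (hm : 0 < m)
    (h : ¬ IsCoprime p (cyclotomic m K)) :
    ∃ α : L, IsPrimitiveRoot α m ∧ aeval α p = 0 := by
  simp only [isCoprime_iff_aeval_ne_zero_of_isAlgClosed K L, not_forall, not_or, not_not] at h
  obtain ⟨α, hp, hc⟩ := h
  refine ⟨α, ?_, hp⟩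
  have : CharZero L := Algebra.charZero_of_charZero K L
  rwa [aeval_def, eval₂_eq_eval_map, map_cyclotomic, ← IsRoot.def,
    isRoot_cyclotomic_iff_charZero hm] at hc

theorem card_le_natDegree_of_forall_isPrimitiveRoot {K L : Type*} [CommRing K] [CommRing L]
    [IsDomain L] [Algebra K L] {p : K[X]} (hp : p.map (algebraMap K L) ≠ 0) {S : Finset ℕ}
    (hS : ∀ m ∈ S, ∃ α : L, IsPrimitiveRoot α m ∧ aeval α p = 0) :
    #S ≤ p.natDegree := by
  classical
  choose! α hα using hS
  calc #S ≤ #(p.aroots L).toFinset :=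
        card_le_card_of_injOn α
          (fun m hm => by simpa [mem_aroots, hp] using (hα m hm).2)
          (fun m₁ h₁ m₂ h₂ h => (hα m₁ h₁).1.unique (h ▸ (hα m₂ h₂).1))
    _ ≤ Multiset.card (p.aroots L) := Multiset.toFinset_card_le _
    _ ≤ p.natDegree := (card_roots' _).trans natDegree_map_le

theorem prod_cyclotomic_dvd_X_pow_prod_sub_one (R : Type*) [CommRing R] {S : Finset ℕ}
    (h0 : 0 ∉ S) : ∏ m ∈ S, cyclotomic m R ∣ X ^ (∏ m ∈ S, m) - 1 := by
  have hpos : 0 < ∏ m ∈ S, m := prod_pos fun m hm => pos_of_ne_zero (ne_of_mem_of_not_mem hm h0)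
  rw [← prod_cyclotomic_eq_X_pow_sub_one hpos]
  exact prod_dvd_prod_of_subset _ _ _ fun m hm => mem_divisors.2 ⟨dvd_prod_of_mem _ hm, hpos.ne'⟩

open Classical in
theorem dvd_prod_cyclotomic_not_isCoprime_of_dvd_X_pow_sub_one {R : Type*} [CommRing R]
    {p : R[X]} {ℓ : ℕ} (hℓ : 0 < ℓ) (h : p ∣ X ^ ℓ - 1) :
    p ∣ ∏ m ∈ ℓ.divisors with ¬ IsCoprime p (cyclotomic m R), cyclotomic m R := by
  rw [← prod_cyclotomic_eq_X_pow_sub_one hℓ,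
    ← prod_filter_mul_prod_filter_not ℓ.divisors (fun m => ¬ IsCoprime p (cyclotomic m R))] at h
  refine (IsCoprime.prod_right fun m hm => ?_).dvd_of_dvd_mul_right h
  simpa using (mem_filter.1 hm).2

open Classical in
theorem orderOf_dvd_prod_of_not_isCoprime_minpoly {K A : Type*} [Field K] [Ring A] [Algebra K A]
    {a : A} (ha : 0 < orderOf a) :
    orderOf a ∣ ∏ m ∈ (orderOf a).divisors with ¬ IsCoprime (minpoly K a) (cyclotomic m K), m := by
  have hdvd : minpoly K a ∣ X ^ orderOf a - 1 := by simp [minpoly.dvd_iff, pow_orderOf_eq_one]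
  have h0 : 0 ∉ (orderOf a).divisors.filter fun m => ¬ IsCoprime (minpoly K a) (cyclotomic m K) :=
    fun h => (pos_of_mem_divisors (mem_filter.1 h).1).false
  refine orderOf_dvd_of_pow_eq_one ?_
  simpa [minpoly.dvd_iff, sub_eq_zero] using
    (dvd_prod_cyclotomic_not_isCoprime_of_dvd_X_pow_sub_one ha hdvd).trans
      (prod_cyclotomic_dvd_X_pow_prod_sub_one K h0)

theorem totient_le_finrank_mul_natDegree {K L : Type*} [Field K] [NumberField K] [Field L]
    [CharZero L] [Algebra K L] {p : K[X]} (hp : p ≠ 0) {m : ℕ} (hm : 0 < m) {α : L}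
    (hα : IsPrimitiveRoot α m) (hαp : aeval α p = 0) :
    φ m ≤ Module.finrank ℚ K * p.natDegree :=
  calc φ m = (minpoly ℚ α).natDegree := by
        rw [← cyclotomic_eq_minpoly_rat hα hm, natDegree_cyclotomic]
    _ ≤ Module.finrank ℚ K * (minpoly K α).natDegree :=
        natDegree_minpoly_le_finrank_mul (IsAlgebraic.isIntegral ⟨p, hp, hαp⟩)
    _ ≤ Module.finrank ℚ K * p.natDegree := by
        gcongr
        exact natDegree_le_of_dvd (minpoly.dvd K α hαp) hp

theorem Matrix.natDegree_minpoly_le {K n : Type*} [Field K] [Fintype n] [DecidableEq n]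
    (A : Matrix n n K) : (minpoly K A).natDegree ≤ Fintype.card n :=
  A.charpoly_natDegree_eq_dim ▸ natDegree_le_of_dvd A.minpoly_dvd_charpoly A.charpoly_monic.ne_zero

theorem finite_order_bound_in_GL_numberField_general
    (k : Type*) [Field k] [NumberField k] (d : ℕ)
    (hd : Module.finrank ℚ k = d) (n : ℕ) (hn : 1 ≤ n)
    (g : GL (Fin n) k) (ℓ : ℕ) (hℓ : orderOf g = ℓ) :
    ℓ ≤ 4 * (n * d) ^ (2 * n) := by
  classical
  rw [← hℓ, ← orderOf_units]
  set A : Matrix (Fin n) (Fin n) k := g.val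
  obtain h0 | hpos := (orderOf A).eq_zero_or_pos
  · simp [h0]
  set p := minpoly k A
  have hp : p ≠ 0 := minpoly.ne_zero (.of_finite k A)
  have hpn : p.natDegree ≤ n := by simpa using A.natDegree_minpoly_le
  set S := (orderOf A).divisors.filter fun m => ¬ IsCoprime p (cyclotomic m k)
  have hSpos : ∀ m ∈ S, 0 < m := fun m hm => pos_of_mem_divisors (mem_filter.1 hm).1
  have hroots : ∀ m ∈ S, ∃ α : AlgebraicClosure k, IsPrimitiveRoot α m ∧ aeval α p = 0 :=
    fun m hm => exists_isPrimitiveRoot_aeval_eq_zero_of_not_isCoprime_cyclotomic (hSpos m hm)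
      (mem_filter.1 hm).2
  have hcard : #S ≤ n :=
    (card_le_natDegree_of_forall_isPrimitiveRoot (Polynomial.map_ne_zero hp) hroots).trans hpn
  have htot : ∀ m ∈ S, φ m ≤ n * d := fun m hm => by
    obtain ⟨α, hα, hαp⟩ := hroots m hm
    grw [mul_comm, ← hd, totient_le_finrank_mul_natDegree hp (hSpos m hm) hα hαp, hpn]
  calc orderOf A ≤ ∏ m ∈ S, m :=
        le_of_dvd (prod_pos hSpos) (orderOf_dvd_prod_of_not_isCoprime_minpoly hpos)
    _ ≤ 4 * (n * d) ^ (2 * #S) :=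
        prod_le_four_mul_pow_card_of_totient_le (fun h => (hSpos 0 h).false) htot
    _ ≤ 4 * (n * d) ^ (2 * n) := by
        gcongr
        exact Nat.mul_pos hn (hd ▸ Module.finrank_pos)

theorem finite_order_bound_in_GL_numberField
    (k : Type*) [Field k] [NumberField k] (d : ℕ)
    (hd : Module.finrank ℚ k = d) (n : ℕ) (hn : 1 ≤ n)
    (g : GL (Fin n) k) (ℓ : ℕ) (hfin : IsOfFinOrder g) (hℓ : orderOf g = ℓ) :
    ℓ ≤ 4 * (n * d) ^ (2 * n) :=
  finite_order_bound_in_GL_numberField_general k d hd n hn g ℓ hℓ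
end

section
/- If every element of a finite subgroup F of GL_n(ℂ) has order at most M, and F contains an abelian subgroup A of index at most j, then |F| ≤ j · M^n. -/
open Module Polynomial

/-! The operators of a commutative group `A` of exponent `e` satisfy `X ^ e - 1`, which is
separable over `ℂ`, so they are simultaneously diagonalizable: `ℂⁿ` is the direct sum of at most
`n` nonzero joint eigenspaces, on each of which every `a ∈ A` acts by an `e`-th root of unity.
An element of `A` is determined by these scalars, hence `|A| ≤ e ^ n`. In an abelian group the
exponent is the order of some element, so `e ≤ M`, and `|F| = [F : A] |A|`. -/

lemma Module.End.isSemisimple_of_pow_eq_one {K V : Type*} [Field K] [AddCommGroup V] [Module K V]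
    {f : End K V} {e : ℕ} (he : (e : K) ≠ 0) (hf : f ^ e = 1) : f.IsSemisimple := by
  refine isSemisimple_of_squarefree_aeval_eq_zero
    (separable_X_pow_sub_C (1 : K) he one_ne_zero).squarefree ?_
  simp [hf]

lemma Module.End.HasEigenvector.pow_eq_one {K V : Type*} [Field K] [AddCommGroup V] [Module K V]
    {f : End K V} {μ : K} {v : V} {e : ℕ} (hv : f.HasEigenvector μ v) (hf : f ^ e = 1) :
    μ ^ e = 1 := by
  have h := hv.pow_apply e
  rw [hf, one_apply] at h
  exact smul_left_injective K hv.2 (by simpa using h.symm)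

namespace Representation

variable {K G V : Type*} [Field K] [CommMonoid G] [AddCommGroup V] [Module K V]
  (ρ : Representation K G V)

def weightSpace (χ : G → K) : Submodule K V :=
  ⨅ g, End.maxGenEigenspace (ρ g) (χ g)

lemma iSupIndep_weightSpace : iSupIndep ρ.weightSpace :=
  End.independent_iInf_maxGenEigenspace_of_forall_mapsTo (fun g ↦ ρ g)
    fun g h ↦ End.mapsTo_maxGenEigenspace_of_comm ((Commute.all h g).map ρ)

lemma iSup_weightSpace_eq_top [IsAlgClosed K] [FiniteDimensional K V] :
    ⨆ χ, ρ.weightSpace χ = ⊤ :=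
  End.iSup_iInf_maxGenEigenspace_eq_top_of_iSup_maxGenEigenspace_eq_top_of_commute _
    (fun g h _ ↦ (Commute.all g h).map ρ)
    fun _ ↦ End.iSup_maxGenEigenspace_eq_top _

variable {ρ}

lemma weightSpace_le_eigenspace {g : G} (hg : End.IsFinitelySemisimple (ρ g)) (χ : G → K) :
    ρ.weightSpace χ ≤ End.eigenspace (ρ g) (χ g) :=
  hg.maxGenEigenspace_eq_eigenspace (χ g) ▸ iInf_le _ g

lemma isFinitelySemisimple_apply_of_exponent_ne_zero (he : (Monoid.exponent G : K) ≠ 0) (g : G) :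
    End.IsFinitelySemisimple (ρ g) :=
  (End.isSemisimple_of_pow_eq_one he (by
    rw [← map_pow, Monoid.pow_exponent_eq_one, map_one])).isFinitelySemisimple

lemma pow_exponent_eq_one_of_weightSpace_ne_bot (he : (Monoid.exponent G : K) ≠ 0) {χ : G → K}
    (hχ : ρ.weightSpace χ ≠ ⊥) (g : G) : χ g ^ Monoid.exponent G = 1 := by
  obtain ⟨v, hv, hv0⟩ := Submodule.exists_mem_ne_zero_of_ne_bot hχ
  exact End.HasEigenvector.pow_eq_one
    ⟨weightSpace_le_eigenspace (isFinitelySemisimple_apply_of_exponent_ne_zero he g) χ hv, hv0⟩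
    (by rw [← map_pow, Monoid.pow_exponent_eq_one, map_one])

lemma apply_eq_of_forall_weight_eq [IsAlgClosed K] [FiniteDimensional K V]
    (hss : ∀ g, End.IsFinitelySemisimple (ρ g)) {g h : G}
    (hgh : ∀ χ, ρ.weightSpace χ ≠ ⊥ → χ g = χ h) : ρ g = ρ h := by
  rw [← LinearMap.eqLocus_eq_top, eq_top_iff, ← ρ.iSup_weightSpace_eq_top, iSup_le_iff]
  intro χ v hv
  by_cases hχ : ρ.weightSpace χ = ⊥
  · simp_all
  · rw [LinearMap.mem_eqLocus, End.mem_eigenspace_iff.1 (weightSpace_le_eigenspace (hss g) χ hv),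
      End.mem_eigenspace_iff.1 (weightSpace_le_eigenspace (hss h) χ hv), hgh χ hχ]

theorem card_le_exponent_pow_finrank [IsAlgClosed K] [FiniteDimensional K V]
    (hρ : Function.Injective ρ) (he : (Monoid.exponent G : K) ≠ 0) :
    Nat.card G ≤ Monoid.exponent G ^ finrank K V := by
  set e := Monoid.exponent G
  have he0 : 0 < e := Nat.pos_of_ne_zero fun h ↦ he (by simp [h])
  let Weight := {χ : G → K // ρ.weightSpace χ ≠ ⊥}
  let _ : Fintype Weight := ρ.iSupIndep_weightSpace.fintypeNeBotOfFiniteDimensional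
  let restrict (g : G) (χ : Weight) : nthRootsFinset e (1 : K) :=
    ⟨χ.1 g, (mem_nthRootsFinset he0 1).2 (pow_exponent_eq_one_of_weightSpace_ne_bot he χ.2 g)⟩
  have h_inj : Function.Injective restrict := fun g h hgh ↦
    hρ (apply_eq_of_forall_weight_eq (isFinitelySemisimple_apply_of_exponent_ne_zero he)
      fun χ hχ ↦ congrArg Subtype.val (congrFun hgh ⟨χ, hχ⟩))
  have h_roots : Nat.card (nthRootsFinset e (1 : K)) ≤ e := by
    classical
    rw [Nat.card_eq_finsetCard, nthRootsFinset_def]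
    exact (Multiset.toFinset_card_le _).trans (card_nthRoots e 1)
  calc Nat.card G ≤ Nat.card (nthRootsFinset e (1 : K)) ^ Nat.card Weight := by
        rw [← Nat.card_fun]; exact Nat.card_le_card_of_injective _ h_inj
    _ ≤ e ^ Nat.card Weight := Nat.pow_le_pow_left h_roots _
    _ ≤ e ^ finrank K V := Nat.pow_le_pow_right he0 (by
        rw [Nat.card_eq_fintype_card]; exact ρ.iSupIndep_weightSpace.subtype_ne_bot_le_finrank)

end Representation

theorem finite_subgroup_card_le_of_abelian_index
    (n : ℕ) (F A : Subgroup (GL (Fin n) ℂ)) [Finite F] (hAF : A ≤ F)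
    (hcomm : ∀ a ∈ A, ∀ b ∈ A, a * b = b * a)
    (j M : ℕ) (hj : A.relIndex F ≤ j)
    (hord : ∀ g ∈ F, orderOf g ≤ M) :
    Nat.card F ≤ j * M ^ n := by
  let _ : CommGroup A := { mul_comm a b := Subtype.ext (hcomm _ a.2 _ b.2) }
  have : Finite A := Finite.of_injective _ (Subgroup.inclusion_injective hAF)
  let ρ : Representation ℂ A (Fin n → ℂ) :=
    (Units.coeHom _).comp (Matrix.GeneralLinearGroup.toLin.toMonoidHom.comp A.subtype)
  have hρ : Function.Injective ρ :=
    Units.val_injective.comp (Matrix.GeneralLinearGroup.toLin.injective.comp A.subtype_injective)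
  have h_exp : Monoid.exponent A ≤ M := by
    obtain ⟨a, ha⟩ := Monoid.exists_orderOf_eq_exponent (Monoid.ExponentExists.of_finite (G := A))
    rw [← ha, ← Subgroup.orderOf_coe]
    exact hord _ (hAF a.2)
  have hA : Nat.card A ≤ Monoid.exponent A ^ n := by
    simpa only [Module.finrank_fin_fun] using
      ρ.card_le_exponent_pow_finrank hρ (Nat.cast_ne_zero.2 Monoid.exponent_ne_zero_of_finite)
  calc Nat.card F = A.relIndex F * Nat.card A := by
        rw [mul_comm, ← Subgroup.relIndex_bot_left, ← Subgroup.relIndex_bot_left,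
          Subgroup.relIndex_mul_relIndex _ _ _ bot_le hAF]
    _ ≤ j * M ^ n := Nat.mul_le_mul hj (hA.trans (Nat.pow_le_pow_left h_exp n))
end
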